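/- Let H be a Hilbert space, P and Q commuting orthogonal projections on H such that PQ = |ψ⟩⟨ψ| is a rank-one projection onto a unit vector ψ. If a is a bounded operator commuting with Q and c is a bounded operator commuting with P, then ⟨ψ, a c ψ⟩ = ⟨ψ, a ψ⟩ · ⟨ψ, c ψ⟩. -/
import Mathlib


open ContinuousLinearMap
open scoped InnerProductSpace

/-- If `P, Q` are commuting orthogonal projections on a Hilbert space `H`
with `P * Q` the rank-one projection onto a unit vector `ψ`, and `a` commutes with `Q`
while `c` commutes with `P`, then `⟪ψ, a c ψ⟫ = ⟪ψ, a ψ⟫ ⬝ ⟪ψ, c ψ⟫`. -/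
theorem rank_one_product_state_factorizes
    {H : Type*} [NormedAddCommGroup H] [InnerProductSpace ℂ H] [CompleteSpace H]
    (P Q : H →L[ℂ] H)
    (hP_idem : IsIdempotentElem P) (hP_sa : IsSelfAdjoint P)
    (hQ_idem : IsIdempotentElem Q) (hQ_sa : IsSelfAdjoint Q)
    (hPQ_comm : Commute P Q)
    (ψ : H) (hψ : ‖ψ‖ = 1)
    (hPQ : ∀ x : H, (P * Q) x = ⟪ψ, x⟫_ℂ • ψ)
    (a c : H →L[ℂ] H)
    (haQ : Commute a Q) (hPc : Commute P c) :
    ⟪ψ, (a * c) ψ⟫_ℂ = ⟪ψ, a ψ⟫_ℂ * ⟪ψ, c ψ⟫_ℂ := by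
  have hψψ : ⟪ψ, ψ⟫_ℂ = 1 := by
    rw [inner_self_eq_norm_sq_to_K, hψ]; norm_num
  have hPQψ : (P * Q) ψ = ψ := by rw [hPQ, hψψ, one_smul]
  have hQψ : Q ψ = ψ := by
    have h1 : Q * (P * Q) = P * Q := by
      rw [← mul_assoc, ← hPQ_comm.eq, mul_assoc, hQ_idem.eq]
    calc Q ψ = Q ((P * Q) ψ) := by rw [hPQψ]
      _ = (Q * (P * Q)) ψ := rfl
      _ = (P * Q) ψ := by rw [h1]
      _ = ψ := hPQψ
  have hPcψ : P (c ψ) = c ψ := by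
    have hPψ : P ψ = ψ := by
      have h1 : P * (P * Q) = P * Q := by rw [← mul_assoc, hP_idem.eq]
      calc P ψ = P ((P * Q) ψ) := by rw [hPQψ]
        _ = (P * (P * Q)) ψ := rfl
        _ = (P * Q) ψ := by rw [h1]
        _ = ψ := hPQψ
    calc P (c ψ) = (P * c) ψ := rfl
      _ = (c * P) ψ := by rw [hPc.eq]
      _ = c (P ψ) := rfl
      _ = c ψ := by rw [hPψ]
  have hQcψ : Q (c ψ) = ⟪ψ, c ψ⟫_ℂ • ψ := by
    calc Q (c ψ) = Q (P (c ψ)) := by rw [hPcψ]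
      _ = (Q * P) (c ψ) := rfl
      _ = (P * Q) (c ψ) := by rw [hPQ_comm.eq]
      _ = ⟪ψ, c ψ⟫_ℂ • ψ := hPQ _
  have hsym := (ContinuousLinearMap.isSelfAdjoint_iff_isSymmetric.mp hQ_sa) ψ (a (c ψ))
  calc ⟪ψ, (a * c) ψ⟫_ℂ = ⟪Q ψ, a (c ψ)⟫_ℂ := by rw [hQψ]; rfl
    _ = ⟪ψ, Q (a (c ψ))⟫_ℂ := hsym
    _ = ⟪ψ, (Q * a) (c ψ)⟫_ℂ := rfl
    _ = ⟪ψ, (a * Q) (c ψ)⟫_ℂ := by rw [haQ.eq]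
    _ = ⟪ψ, a (Q (c ψ))⟫_ℂ := rfl
    _ = ⟪ψ, a (⟪ψ, c ψ⟫_ℂ • ψ)⟫_ℂ := by rw [hQcψ]
    _ = ⟪ψ, ⟪ψ, c ψ⟫_ℂ • a ψ⟫_ℂ := by rw [map_smul]
    _ = ⟪ψ, c ψ⟫_ℂ * ⟪ψ, a ψ⟫_ℂ := inner_smul_right _ _ _
    _ = ⟪ψ, a ψ⟫_ℂ * ⟪ψ, c ψ⟫_ℂ := mul_comm _ _
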